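/- arXiv:2603.01719 — 4 statements merged into one kernel-verified Lean document; each statement's English description precedes it below -/
import Mathlib

section
/- Let f be a continuous probability density on ℝ with cumulative distribution function F, fix α ∈ (0,1), and let ψ : ℝ → (0,∞) be a differentiable function satisfying the implicit mass constraint F(c + ψ(c)) − F(c − ψ(c)) = 1 − α for all c ∈ ℝ. If at a point c the values f(c + ψ(c)) and f(c − ψ(c)) exist with f(c + ψ(c)) + f(c − ψ(c)) > 0, then ψ'(c) = −( f(c + ψ(c)) − f(c − ψ(c)) ) / ( f(c + ψ(c)) + f(c − ψ(c)) ). In particular, if the right endpoint c + ψ(c) lies at strictly higher density than the left endpoint c − ψ(c), then ψ'(c) < 0. -/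
open MeasureTheory Filter Set

/-- **Push–pull derivative of the minimal symmetric radius.**
If `f` is a continuous probability density with CDF `F`, `α ∈ (0,1)`, and `ψ` is a
positive differentiable function satisfying the implicit mass constraint
`F (c + ψ c) - F (c - ψ c) = 1 - α` for all `c`, then at any point `c` where the
endpoint densities have a strictly positive sum,
`ψ' c = -(f (c + ψ c) - f (c - ψ c)) / (f (c + ψ c) + f (c - ψ c))`;
in particular `ψ' c < 0` whenever the right endpoint has strictly higher density. -/
theorem psi_derivative_push_pull
    (f : ℝ → ℝ) (hf_cont : Continuous f) (hf_nonneg : ∀ y, 0 ≤ f y)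
    (hf_int : Integrable f) (hf_one : ∫ y, f y = 1)
    (F : ℝ → ℝ) (hF : ∀ t, F t = ∫ y in Set.Iic t, f y)
    (α : ℝ) (hα : α ∈ Set.Ioo (0 : ℝ) 1)
    (ψ : ℝ → ℝ) (hψ_pos : ∀ c, 0 < ψ c) (hψ_diff : Differentiable ℝ ψ)
    (hconstraint : ∀ c, F (c + ψ c) - F (c - ψ c) = 1 - α)
    (c : ℝ) (hden : 0 < f (c + ψ c) + f (c - ψ c)) :
    deriv ψ c = -((f (c + ψ c) - f (c - ψ c)) / (f (c + ψ c) + f (c - ψ c))) ∧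
      (f (c - ψ c) < f (c + ψ c) → deriv ψ c < 0) := by
  have hF' : ∀ t, HasDerivAt F (f t) t := by
    intro t
    have h0 : ∀ u, F u = F 0 + ∫ y in (0:ℝ)..u, f y := by
      intro u
      have := intervalIntegral.integral_Iic_sub_Iic (μ := volume) (f := f) (a := (0:ℝ)) (b := u)
        hf_int.integrableOn hf_int.integrableOn
      rw [hF u, hF 0]
      linarith [this]
    have hD : HasDerivAt (fun u => F 0 + ∫ y in (0:ℝ)..u, f y) (f t) t := by
      have := (intervalIntegral.integral_hasDerivAt_right (a := (0:ℝ)) (b := t)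
        hf_int.intervalIntegrable (hf_cont.stronglyMeasurableAtFilter _ _)
        hf_cont.continuousAt)
      exact this.const_add (F 0)
    exact hD.congr_of_eventuallyEq (by filter_upwards with u using h0 u)
  set a := c + ψ c with ha
  set b := c - ψ c with hb
  set D := deriv ψ c with hD
  have hψd : HasDerivAt ψ D c := (hψ_diff c).hasDerivAt
  have h1 : HasDerivAt (fun x => x + ψ x) (1 + D) c := (hasDerivAt_id c).add hψd
  have h2 : HasDerivAt (fun x => x - ψ x) (1 - D) c := (hasDerivAt_id c).sub hψd
  have hg : HasDerivAt (fun x => F (x + ψ x) - F (x - ψ x))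
      (f a * (1 + D) - f b * (1 - D)) c :=
    (((hF' a).comp c h1)).sub ((hF' b).comp c h2)
  have hconst : (fun x => F (x + ψ x) - F (x - ψ x)) = fun _ => 1 - α :=
    funext hconstraint
  rw [hconst] at hg
  have key : f a * (1 + D) - f b * (1 - D) = 0 := hg.unique (hasDerivAt_const c (1 - α))
  have hne : f a + f b ≠ 0 := ne_of_gt hden
  have hDval : D = -((f a - f b) / (f a + f b)) := by
    field_simp
    linarith
  refine ⟨hDval, fun hlt => ?_⟩
  rw [hDval]
  have : 0 < (f a - f b) / (f a + f b) := div_pos (by linarith) hden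
  linarith
end

section
/- Let f be a probability density on ℝ bounded by f_max < ∞, let σ(z) = 1/(1+e^{−z}) be the logistic sigmoid, let β > 0, and define the soft-coverage functional Φ_β(c, r) = ∫_ℝ σ((r − |y − c|)/β) f(y) dy and the smoothed density f_β(z) = (f * K_β)(z) where K_β(u) = σ'(u/β)/β. Then for every c ∈ ℝ and r > 0, the partial derivative ∂Φ_β/∂c exists and equals f_β(c + r) − f_β(c − r) + ε_β(c, r), where the remainder satisfies |ε_β(c, r)| ≤ 2 f_max (1 − σ(r/β)). -/
open MeasureTheory Filter Set
open Topology NNReal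

/-- The logistic sigmoid `σ(z) = 1 / (1 + e^{-z})`. -/
noncomputable def sigmoid (z : ℝ) : ℝ := (1 + Real.exp (-z))⁻¹

/-- The logistic smoothing kernel `K_β(u) = σ'(u/β) / β`. -/
noncomputable def Kker (β u : ℝ) : ℝ := deriv sigmoid (u / β) / β

/-- The β-smoothed (convolved) density `f_β(z) = (f * K_β)(z) = ∫ f(y) K_β(z - y) dy`. -/
noncomputable def smoothed (f : ℝ → ℝ) (β z : ℝ) : ℝ := ∫ y, f y * Kker β (z - y)

/-- The soft-coverage functional `Φ_β(c, r) = ∫ σ((r - |y - c|)/β) f(y) dy`. -/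
noncomputable def softCov (f : ℝ → ℝ) (β c r : ℝ) : ℝ :=
  ∫ y, sigmoid ((r - |y - c|) / β) * f y

lemma one_add_exp_pos (z : ℝ) : 0 < 1 + Real.exp (-z) := by positivity

lemma sigmoid_pos (z : ℝ) : 0 < sigmoid z := by
  unfold sigmoid; positivity

lemma sigmoid_lt_one (z : ℝ) : sigmoid z < 1 := by
  unfold sigmoid
  rw [inv_lt_one_iff₀]
  right; linarith [Real.exp_pos (-z)]

lemma hasDerivAt_sigmoid (z : ℝ) :
    HasDerivAt sigmoid (sigmoid z * (1 - sigmoid z)) z := by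
  have h0 : HasDerivAt (fun z : ℝ => 1 + Real.exp (-z)) (-Real.exp (-z)) z := by
    simpa using ((Real.hasDerivAt_exp (-z)).comp z (hasDerivAt_neg z)).const_add 1
  have hne : 1 + Real.exp (-z) ≠ 0 := (one_add_exp_pos z).ne'
  have := h0.inv hne
  convert (show HasDerivAt sigmoid _ z from this) using 1
  unfold sigmoid
  field_simp
  ring

lemma deriv_sigmoid (z : ℝ) : deriv sigmoid z = sigmoid z * (1 - sigmoid z) :=
  (hasDerivAt_sigmoid z).deriv

lemma sigmoid_neg (z : ℝ) : sigmoid (-z) = 1 - sigmoid z := by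
  unfold sigmoid
  rw [neg_neg, Real.exp_neg]
  have h1 : (0:ℝ) < Real.exp z := Real.exp_pos z
  field_simp
  ring

lemma deriv_sigmoid_nonneg (z : ℝ) : 0 ≤ deriv sigmoid z := by
  rw [deriv_sigmoid]
  have := sigmoid_pos z
  have := sigmoid_lt_one z
  nlinarith

lemma deriv_sigmoid_le (z : ℝ) : deriv sigmoid z ≤ 1/4 := by
  rw [deriv_sigmoid]
  nlinarith [sq_nonneg (sigmoid z - 1/2)]

lemma continuous_sigmoid' : Continuous sigmoid := by
  unfold sigmoid
  exact (continuous_const.add (Real.continuous_exp.comp continuous_neg)).inv₀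
    fun z => (one_add_exp_pos z).ne'

lemma continuous_deriv_sigmoid : Continuous (deriv sigmoid) := by
  have : deriv sigmoid = fun z => sigmoid z * (1 - sigmoid z) := funext deriv_sigmoid
  rw [this]
  exact continuous_sigmoid'.mul (continuous_const.sub continuous_sigmoid')

lemma sigmoid_tendsto_atTop : Tendsto sigmoid atTop (𝓝 1) := by
  have h : Tendsto (fun z : ℝ => 1 + Real.exp (-z)) atTop (𝓝 1) := by
    simpa using tendsto_const_nhds.add (Real.tendsto_exp_atBot.comp tendsto_neg_atTop_atBot)
  have := h.inv₀ one_ne_zero; rw [inv_one] at this; exact this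

lemma lipschitz_sigmoid (a b : ℝ) : |sigmoid a - sigmoid b| ≤ (1/4) * |a - b| := by
  have h : LipschitzWith (1/4 : ℝ≥0) sigmoid := by
    apply lipschitzWith_of_nnnorm_deriv_le (fun z => (hasDerivAt_sigmoid z).differentiableAt)
    intro x
    rw [← NNReal.coe_le_coe, coe_nnnorm]
    simp only [Real.norm_eq_abs]
    rw [abs_of_nonneg (deriv_sigmoid_nonneg x)]
    simpa using deriv_sigmoid_le x
  have := h.dist_le_mul a b
  simpa [Real.dist_eq] using this

lemma Kker_nonneg {β : ℝ} (hβ : 0 < β) (u : ℝ) : 0 ≤ Kker β u :=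
  div_nonneg (deriv_sigmoid_nonneg _) hβ.le

lemma Kker_le {β : ℝ} (hβ : 0 < β) (u : ℝ) : Kker β u ≤ 1 / (4 * β) := by
  unfold Kker
  rw [div_le_div_iff₀ hβ (by positivity)]
  have := deriv_sigmoid_le (u / β)
  nlinarith

lemma Kker_neg {β : ℝ} (u : ℝ) : Kker β (-u) = Kker β u := by
  unfold Kker
  rw [neg_div, deriv_sigmoid, deriv_sigmoid, sigmoid_neg]
  ring

lemma continuous_Kker (β : ℝ) : Continuous (Kker β) :=
  (continuous_deriv_sigmoid.comp (continuous_id.div_const β)).div_const β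

lemma hasDerivAt_sigmoid_affine {β : ℝ} (hβ : 0 < β) (a y : ℝ) :
    HasDerivAt (fun y => sigmoid ((a + y) / β)) (Kker β (a + y)) y := by
  have hin : HasDerivAt (fun y : ℝ => (a + y) / β) (1 / β) y := by
    simpa using ((hasDerivAt_id y).const_add a).div_const β
  have := (hasDerivAt_sigmoid ((a + y) / β)).comp y hin
  simpa [Kker, deriv_sigmoid, div_eq_mul_inv, one_div, mul_comm, Function.comp_def] using this

lemma tendsto_sigmoid_affine {β : ℝ} (hβ : 0 < β) (a : ℝ) :
    Tendsto (fun y => sigmoid ((a + y) / β)) atTop (𝓝 1) := by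
  apply sigmoid_tendsto_atTop.comp
  apply Tendsto.atTop_div_const hβ
  exact tendsto_atTop_add_const_left _ a tendsto_id

lemma integrableOn_Kker_Ioi {β : ℝ} (hβ : 0 < β) (a c₀ : ℝ) :
    IntegrableOn (fun x => Kker β (a + x)) (Ioi c₀) := by
  exact integrableOn_Ioi_deriv_of_nonneg' (fun x _ => hasDerivAt_sigmoid_affine hβ a x)
    (fun x _ => Kker_nonneg hβ _) (tendsto_sigmoid_affine hβ a)

lemma integral_Kker_Ioi {β : ℝ} (hβ : 0 < β) (a c₀ : ℝ) :
    ∫ x in Ioi c₀, Kker β (a + x) = 1 - sigmoid ((a + c₀) / β) := by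
  exact integral_Ioi_of_hasDerivAt_of_nonneg' (fun x _ => hasDerivAt_sigmoid_affine hβ a x)
    (fun x _ => Kker_nonneg hβ _) (tendsto_sigmoid_affine hβ a)

/-- **Soft-gradient endpoint imbalance.**
For a probability density `f` bounded by `fmax`, the partial derivative in `c` of the
soft-coverage functional `Φ_β(c, r)` exists and equals
`f_β(c + r) - f_β(c - r) + ε`, where `|ε| ≤ 2 fmax (1 - σ(r/β))`. -/
theorem soft_gradient_endpoint_imbalance
    (f : ℝ → ℝ) (hf_nonneg : ∀ y, 0 ≤ f y)
    (hf_int : Integrable f) (hf_one : ∫ y, f y = 1)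
    (fmax : ℝ) (hfmax : ∀ y, f y ≤ fmax)
    (β : ℝ) (hβ : 0 < β) (c r : ℝ) (hr : 0 < r) :
    ∃ ε : ℝ, |ε| ≤ 2 * fmax * (1 - sigmoid (r / β)) ∧
      HasDerivAt (fun c' => softCov f β c' r)
        (smoothed f β (c + r) - smoothed f β (c - r) + ε) c := by
  have hfmax0 : 0 ≤ fmax := le_trans (hf_nonneg 0) (hfmax 0)
  have hσ1 : 0 ≤ 1 - sigmoid (r / β) := by linarith [sigmoid_lt_one (r / β)]
  have hcont_inner : ∀ x : ℝ, Continuous (fun y : ℝ => (r - |y - x|) / β) := fun x =>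
    (continuous_const.sub ((continuous_id.sub continuous_const).abs)).div_const β
  have hcont_inner' : ∀ y : ℝ, Continuous (fun x : ℝ => (r - |y - x|) / β) := fun y =>
    (continuous_const.sub ((continuous_const.sub continuous_id).abs)).div_const β
  have hcont0 : ∀ x : ℝ, Continuous (fun y : ℝ => r - |y - x|) := fun x =>
    continuous_const.sub ((continuous_id.sub continuous_const).abs)
  -- generic integrability of (integrable) * Kker(affine)
  have hmul : ∀ (g h : ℝ → ℝ), Integrable g → Continuous h →
      Integrable (fun y => g y * Kker β (h y)) := by
    intro g h hg hh
    have : Integrable (fun y => Kker β (h y) * g y) :=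
      hg.bdd_mul ((continuous_Kker β).comp hh).aestronglyMeasurable
        (c := 1 / (4 * β)) (ae_of_all _ fun y => by
          rw [Real.norm_eq_abs, abs_of_nonneg (Kker_nonneg hβ _)]
          exact Kker_le hβ _)
    exact this.congr (ae_of_all _ fun y => mul_comm _ _)
  have h1 : ∀ᶠ x in 𝓝 c, AEStronglyMeasurable
      (fun y => sigmoid ((r - |y - x|) / β) * f y) (volume : Measure ℝ) := by
    filter_upwards with x
    exact ((continuous_sigmoid'.comp (hcont_inner x)).aestronglyMeasurable).mul hf_int.1
  have h2 : Integrable (fun y => sigmoid ((r - |y - c|) / β) * f y) :=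
    hf_int.bdd_mul (continuous_sigmoid'.comp (hcont_inner c)).aestronglyMeasurable
      (c := 1) (ae_of_all _ fun y => by
        rw [Real.norm_eq_abs, abs_of_nonneg (sigmoid_pos _).le]
        exact (sigmoid_lt_one _).le)
  have h3 : AEStronglyMeasurable
      (fun y => (if c < y then (1:ℝ) else -1) * Kker β (r - |y - c|) * f y)
      (volume : Measure ℝ) := by
    refine AEStronglyMeasurable.mul (AEStronglyMeasurable.mul ?_ ?_) hf_int.1
    · exact (Measurable.ite measurableSet_Ioi measurable_const
        measurable_const).aestronglyMeasurable
    · exact ((continuous_Kker β).comp (hcont0 c)).aestronglyMeasurable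
  have h4 : ∀ᵐ y : ℝ, LipschitzOnWith (Real.nnabs (f y / (4 * β)))
      (fun x => sigmoid ((r - |y - x|) / β) * f y) (Metric.ball c 1) := by
    filter_upwards with y
    rw [lipschitzOnWith_iff_dist_le_mul]
    intro x _ x' _
    rw [Real.dist_eq, Real.dist_eq, Real.coe_nnabs]
    have e1 : sigmoid ((r - |y - x|) / β) * f y - sigmoid ((r - |y - x'|) / β) * f y =
        (sigmoid ((r - |y - x|) / β) - sigmoid ((r - |y - x'|) / β)) * f y := by ring
    rw [e1, abs_mul]
    have hσl := lipschitz_sigmoid ((r - |y - x|) / β) ((r - |y - x'|) / β)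
    have habs : |(r - |y - x|) / β - (r - |y - x'|) / β| ≤ |x - x'| / β := by
      rw [div_sub_div_same, abs_div, abs_of_pos hβ]
      have : |r - |y - x| - (r - |y - x'|)| ≤ |x - x'| := by
        have e2 : r - |y - x| - (r - |y - x'|) = |y - x'| - |y - x| := by ring
        rw [e2]
        have := abs_abs_sub_abs_le_abs_sub (y - x') (y - x)
        have e3 : y - x' - (y - x) = x - x' := by ring
        rw [e3] at this
        exact this
      exact div_le_div_of_nonneg_right this hβ.le
    have hfy : |f y| = f y := abs_of_nonneg (hf_nonneg y)
    have hb : |f y / (4 * β)| = f y / (4 * β) := abs_of_nonneg (div_nonneg (hf_nonneg y) (by positivity))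
    rw [hfy, hb]
    calc |sigmoid ((r - |y - x|) / β) - sigmoid ((r - |y - x'|) / β)| * f y
        ≤ (1/4 * (|x - x'| / β)) * f y := by
          apply mul_le_mul_of_nonneg_right _ (hf_nonneg y)
          exact le_trans hσl (by nlinarith [abs_nonneg (x - x')])
      _ = f y / (4 * β) * |x - x'| := by field_simp
  have h5 : Integrable (fun y : ℝ => f y / (4 * β)) := hf_int.div_const _
  have h6 : ∀ᵐ y : ℝ, HasDerivAt (fun x => sigmoid ((r - |y - x|) / β) * f y)
      ((if c < y then (1:ℝ) else -1) * Kker β (r - |y - c|) * f y) c := by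
    have hae : ∀ᵐ y : ℝ, y ≠ c := by
      rw [ae_iff]
      simpa using measure_singleton c
    filter_upwards [hae] with y hy
    rcases lt_or_gt_of_ne hy with hlt | hgt
    · -- y < c : locally |y - x| = x - y
      rw [if_neg (not_lt.2 hlt.le)]
      have hev : (fun x => sigmoid ((r - |y - x|) / β) * f y) =ᶠ[𝓝 c]
          fun x => sigmoid ((r + y - x) / β) * f y := by
        filter_upwards [Ioi_mem_nhds hlt] with x hx
        rw [abs_of_neg (sub_neg.2 hx)]
        ring_nf
      have hin : HasDerivAt (fun x : ℝ => (r + y - x) / β) (-1 / β) c := by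
        simpa using ((hasDerivAt_id c).const_sub (r + y)).div_const β
      have hd : HasDerivAt (fun x => sigmoid ((r + y - x) / β) * f y)
          (-1 * Kker β (r - |y - c|) * f y) c := by
        have h := ((hasDerivAt_sigmoid ((r + y - c) / β)).comp c hin).mul_const (f y)
        have e : -1 * Kker β (r - |y - c|) * f y
            = sigmoid ((r + y - c) / β) * (1 - sigmoid ((r + y - c) / β)) * (-1 / β) * f y := by
          rw [abs_of_neg (sub_neg.2 hlt), Kker, deriv_sigmoid]
          have e2 : r - -(y - c) = r + y - c := by ring
          rw [e2]; ring
        rw [e]; exact h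
      exact hd.congr_of_eventuallyEq hev
    · -- c < y : locally |y - x| = y - x
      rw [if_pos hgt]
      have hev : (fun x => sigmoid ((r - |y - x|) / β) * f y) =ᶠ[𝓝 c]
          fun x => sigmoid ((r - y + x) / β) * f y := by
        filter_upwards [Iio_mem_nhds hgt] with x hx
        rw [abs_of_pos (sub_pos.2 hx)]
        ring_nf
      have hd : HasDerivAt (fun x => sigmoid ((r - y + x) / β) * f y)
          (1 * Kker β (r - |y - c|) * f y) c := by
        have h := (hasDerivAt_sigmoid_affine hβ (r - y) c).mul_const (f y)
        have e : 1 * Kker β (r - |y - c|) * f y = Kker β (r - y + c) * f y := by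
          rw [one_mul, abs_of_pos (sub_pos.2 hgt)]
          have e2 : r - (y - c) = r - y + c := by ring
          rw [e2]
        rw [e]; exact h
      exact hd.congr_of_eventuallyEq hev
  have key := hasDerivAt_integral_of_dominated_loc_of_lip
    (F := fun x y => sigmoid ((r - |y - x|) / β) * f y)
    (F' := fun y => (if c < y then (1:ℝ) else -1) * Kker β (r - |y - c|) * f y)
    (bound := fun y => f y / (4 * β)) (Metric.ball_mem_nhds c one_pos) h1 h2 h3 h4 h5 h6
  obtain ⟨hF'int, hD⟩ := key
  -- integrability of the four pieces
  have hint1 : Integrable (fun y => f y * Kker β ((c + r) - y)) :=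
    hmul f _ hf_int (continuous_const.sub continuous_id)
  have hint2 : Integrable (fun y => f y * Kker β ((c - r) - y)) :=
    hmul f _ hf_int (continuous_const.sub continuous_id)
  have hsm1 : smoothed f β (c + r) = (∫ y in Iic c, f y * Kker β ((c + r) - y))
      + ∫ y in Ioi c, f y * Kker β ((c + r) - y) := by
    simp only [smoothed]
    exact (intervalIntegral.integral_Iic_add_Ioi hint1.integrableOn hint1.integrableOn).symm
  have hsm2 : smoothed f β (c - r) = (∫ y in Iic c, f y * Kker β ((c - r) - y))
      + ∫ y in Ioi c, f y * Kker β ((c - r) - y) := by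
    simp only [smoothed]
    exact (intervalIntegral.integral_Iic_add_Ioi hint2.integrableOn hint2.integrableOn).symm
  have hIoi : (∫ y in Ioi c, (if c < y then (1:ℝ) else -1) * Kker β (r - |y - c|) * f y)
      = ∫ y in Ioi c, f y * Kker β ((c + r) - y) := by
    apply setIntegral_congr_fun measurableSet_Ioi
    intro y hy
    dsimp only
    rw [if_pos (mem_Ioi.1 hy), abs_of_pos (sub_pos.2 (mem_Ioi.1 hy)), one_mul,
      show r - (y - c) = (c + r) - y from by ring]
    ring
  have hIic : (∫ y in Iic c, (if c < y then (1:ℝ) else -1) * Kker β (r - |y - c|) * f y)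
      = -∫ y in Iic c, f y * Kker β ((c - r) - y) := by
    rw [← integral_neg]
    apply setIntegral_congr_fun measurableSet_Iic
    intro y hy
    dsimp only
    rw [if_neg (not_lt.2 (mem_Iic.1 hy)), abs_of_nonpos (sub_nonpos.2 (mem_Iic.1 hy)),
      show r - -(y - c) = -((c - r) - y) from by ring, Kker_neg]
    ring
  have hInt : (∫ y, (if c < y then (1:ℝ) else -1) * Kker β (r - |y - c|) * f y)
      = -(∫ y in Iic c, f y * Kker β ((c - r) - y))
        + ∫ y in Ioi c, f y * Kker β ((c + r) - y) := by
    rw [← intervalIntegral.integral_Iic_add_Ioi hF'int.integrableOn hF'int.integrableOn, hIic, hIoi]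
  -- bounds for the tail terms
  have hA0 : 0 ≤ ∫ y in Iic c, f y * Kker β ((c + r) - y) :=
    setIntegral_nonneg measurableSet_Iic fun y _ =>
      mul_nonneg (hf_nonneg y) (Kker_nonneg hβ _)
  have hB0 : 0 ≤ ∫ y in Ioi c, f y * Kker β ((c - r) - y) :=
    setIntegral_nonneg measurableSet_Ioi fun y _ =>
      mul_nonneg (hf_nonneg y) (Kker_nonneg hβ _)
  have hAsub : (∫ y in Iic c, f y * Kker β ((c + r) - y))
      = ∫ x in Ioi (-c), f (-x) * Kker β ((c + r) + x) := by
    have h := integral_comp_neg_Ioi (-c) (fun y => f y * Kker β ((c + r) - y))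
    rw [neg_neg] at h
    rw [← h]
    apply setIntegral_congr_fun measurableSet_Ioi
    intro x _
    dsimp only
    rw [show (c + r) - (-x) = (c + r) + x from by ring]
  have hAle : (∫ y in Iic c, f y * Kker β ((c + r) - y)) ≤ fmax * (1 - sigmoid (r / β)) := by
    rw [hAsub]
    have hle : (∫ x in Ioi (-c), f (-x) * Kker β ((c + r) + x))
        ≤ ∫ x in Ioi (-c), fmax * Kker β ((c + r) + x) := by
      apply setIntegral_mono_on
        ((hmul (fun x => f (-x)) _ hf_int.comp_neg (continuous_const.add continuous_id)).integrableOn)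
        ((integrableOn_Kker_Ioi hβ (c + r) (-c)).const_mul fmax)
        measurableSet_Ioi
      intro x _
      exact mul_le_mul_of_nonneg_right (hfmax _) (Kker_nonneg hβ _)
    calc (∫ x in Ioi (-c), f (-x) * Kker β ((c + r) + x))
        ≤ ∫ x in Ioi (-c), fmax * Kker β ((c + r) + x) := hle
      _ = fmax * ∫ x in Ioi (-c), Kker β ((c + r) + x) := by rw [integral_const_mul]
      _ = fmax * (1 - sigmoid (r / β)) := by
          rw [integral_Kker_Ioi hβ (c + r) (-c), show c + r + -c = r from by ring]
  have hBeq : (∫ y in Ioi c, f y * Kker β ((c - r) - y))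
      = ∫ y in Ioi c, f y * Kker β ((r - c) + y) := by
    apply setIntegral_congr_fun measurableSet_Ioi
    intro y _
    dsimp only
    rw [show (r - c) + y = -((c - r) - y) from by ring, Kker_neg]
  have hBle : (∫ y in Ioi c, f y * Kker β ((c - r) - y)) ≤ fmax * (1 - sigmoid (r / β)) := by
    rw [hBeq]
    have hle : (∫ y in Ioi c, f y * Kker β ((r - c) + y))
        ≤ ∫ y in Ioi c, fmax * Kker β ((r - c) + y) := by
      apply setIntegral_mono_on
        ((hmul f _ hf_int (continuous_const.add continuous_id)).integrableOn)
        ((integrableOn_Kker_Ioi hβ (r - c) c).const_mul fmax)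
        measurableSet_Ioi
      intro y _
      exact mul_le_mul_of_nonneg_right (hfmax _) (Kker_nonneg hβ _)
    calc (∫ y in Ioi c, f y * Kker β ((r - c) + y))
        ≤ ∫ y in Ioi c, fmax * Kker β ((r - c) + y) := hle
      _ = fmax * ∫ y in Ioi c, Kker β ((r - c) + y) := by rw [integral_const_mul]
      _ = fmax * (1 - sigmoid (r / β)) := by
          rw [integral_Kker_Ioi hβ (r - c) c, show r - c + c = r from by ring]
  refine ⟨(∫ y in Ioi c, f y * Kker β ((c - r) - y))
    - ∫ y in Iic c, f y * Kker β ((c + r) - y), ?_, ?_⟩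
  · rw [show 2 * fmax * (1 - sigmoid (r / β)) = 2 * (fmax * (1 - sigmoid (r / β))) from by ring,
      abs_le]
    constructor <;> linarith
  · have heq : smoothed f β (c + r) - smoothed f β (c - r)
        + ((∫ y in Ioi c, f y * Kker β ((c - r) - y))
          - ∫ y in Iic c, f y * Kker β ((c + r) - y))
        = ∫ y, (if c < y then (1:ℝ) else -1) * Kker β (r - |y - c|) * f y := by
      rw [hInt, hsm1, hsm2]; ring
    rw [heq]
    exact hD
end

section
/- Let S_1, …, S_n, S_{n+1} be exchangeable real random variables and fix α ∈ (0,1). Let q̂ be the ⌈(n+1)(1−α)⌉-th smallest value among S_1, …, S_n (assuming ⌈(n+1)(1−α)⌉ ≤ n). Then P(S_{n+1} ≤ q̂) ≥ 1 − α. Consequently, in split-conformal prediction with normalized score S = |Y − ĉ(X)| / r̂(X) and calibration scores exchangeable with the test score, the interval [ĉ(x) − q̂ r̂(x), ĉ(x) + q̂ r̂(x)] covers Y with probability at least 1 − α. -/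
open MeasureTheory Filter Set
noncomputable def orderStat {n : ℕ} (k : ℕ) (s : Fin n → ℝ) : ℝ :=
  sInf {t : ℝ | k ≤ (Finset.univ.filter fun i => s i ≤ t).card}

lemma osSet_nonempty {m k : ℕ} (s : Fin m → ℝ) (hkm : k ≤ m) (hm : 0 < m) :
    {t : ℝ | k ≤ (Finset.univ.filter fun i => s i ≤ t).card}.Nonempty := by
  haveI : Nonempty (Fin m) := Fin.pos_iff_nonempty.mp hm
  have hne : (Finset.univ.image s).Nonempty := by
    simpa using Finset.univ_nonempty (α := Fin m)
  refine ⟨(Finset.univ.image s).max' hne, ?_⟩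
  have : (Finset.univ.filter fun i => s i ≤ (Finset.univ.image s).max' hne) = Finset.univ := by
    ext i
    simp only [Finset.mem_filter, Finset.mem_univ, true_and, iff_true]
    exact Finset.le_max' _ _ (Finset.mem_image_of_mem s (Finset.mem_univ i))
  simp [this, hkm]

lemma osSet_bddBelow {m k : ℕ} (s : Fin m → ℝ) (hk1 : 1 ≤ k) (hm : 0 < m) :
    BddBelow {t : ℝ | k ≤ (Finset.univ.filter fun i => s i ≤ t).card} := by
  haveI : Nonempty (Fin m) := Fin.pos_iff_nonempty.mp hm
  have hne : (Finset.univ.image s).Nonempty := by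
    simpa using Finset.univ_nonempty (α := Fin m)
  refine ⟨(Finset.univ.image s).min' hne, ?_⟩
  intro t ht
  simp only [Set.mem_setOf_eq] at ht
  have hpos : 0 < (Finset.univ.filter fun i => s i ≤ t).card := lt_of_lt_of_le hk1 ht
  obtain ⟨i, hi⟩ := Finset.card_pos.mp hpos
  have hsi : s i ≤ t := (Finset.mem_filter.mp hi).2
  exact le_trans (Finset.min'_le _ _ (Finset.mem_image_of_mem s (Finset.mem_univ i))) hsi

/-- at least k values are ≤ orderStat k s -/
lemma orderStat_count_ge {m k : ℕ} (s : Fin m → ℝ) (hk1 : 1 ≤ k) (hkm : k ≤ m) :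
    k ≤ (Finset.univ.filter fun i => s i ≤ orderStat k s).card := by
  have hm : 0 < m := lt_of_lt_of_le hk1 hkm
  set A := {t : ℝ | k ≤ (Finset.univ.filter fun i => s i ≤ t).card} with hA
  have hne := osSet_nonempty s hkm hm
  have hbdd := osSet_bddBelow s hk1 hm
  set T := orderStat k s with hT
  by_cases hF : (Finset.univ.filter fun i => T < s i).Nonempty
  · set d := ((Finset.univ.filter fun i => T < s i).image s).min' (hF.image s) with hd
    have hdT : T < d := by
      rw [Finset.lt_min'_iff]
      intro b hb
      obtain ⟨i, hi, hsi⟩ := Finset.mem_image.mp hb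
      rw [← hsi]; exact (Finset.mem_filter.mp hi).2
    obtain ⟨t, htA, htd⟩ : ∃ t ∈ A, t < d := by
      by_contra h
      push_neg at h
      have : d ≤ T := le_csInf hne h
      linarith
    have hTt : T ≤ t := csInf_le hbdd htA
    have hsub : (Finset.univ.filter fun i => s i ≤ t) ⊆ (Finset.univ.filter fun i => s i ≤ T) := by
      intro i hi
      have hsi : s i ≤ t := (Finset.mem_filter.mp hi).2
      simp only [Finset.mem_filter, Finset.mem_univ, true_and]
      by_contra hlt
      push_neg at hlt
      have : d ≤ s i := Finset.min'_le _ _ (Finset.mem_image_of_mem s (by simp [hlt]))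
      linarith
    exact le_trans htA (Finset.card_le_card hsub)
  · have : (Finset.univ.filter fun i => s i ≤ T) = Finset.univ := by
      ext i
      simp only [Finset.mem_filter, Finset.mem_univ, true_and, iff_true]
      by_contra h
      exact hF ⟨i, by simp [lt_of_not_ge h]⟩
    rw [this]; simpa using hkm

/-- at most k-1 values are < orderStat k s -/
lemma orderStat_count_lt {m k : ℕ} (s : Fin m → ℝ) (hk1 : 1 ≤ k) (hkm : k ≤ m) :
    (Finset.univ.filter fun i => s i < orderStat k s).card ≤ k - 1 := by
  have hm : 0 < m := lt_of_lt_of_le hk1 hkm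
  set T := orderStat k s with hT
  by_contra h
  push_neg at h
  have hk' : k ≤ (Finset.univ.filter fun i => s i < T).card := by omega
  have hF : (Finset.univ.filter fun i => s i < T).Nonempty := by
    rw [← Finset.card_pos]; omega
  set t := ((Finset.univ.filter fun i => s i < T).image s).max' (hF.image s) with htdef
  have htT : t < T := by
    rw [Finset.max'_lt_iff]
    intro b hb
    obtain ⟨i, hi, hsi⟩ := Finset.mem_image.mp hb
    rw [← hsi]; exact (Finset.mem_filter.mp hi).2
  have htA : t ∈ {t : ℝ | k ≤ (Finset.univ.filter fun i => s i ≤ t).card} := by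
    refine le_trans hk' (Finset.card_le_card ?_)
    intro i hi
    simp only [Finset.mem_filter, Finset.mem_univ, true_and]
    exact Finset.le_max' _ _ (Finset.mem_image_of_mem s hi)
  have hTt : T ≤ t := csInf_le (osSet_bddBelow s hk1 hm) htA
  linarith

/-- at least k indices have rank ≤ k-1 (rank = # strictly smaller values) -/
lemma rank_count {m k : ℕ} (s : Fin m → ℝ) (hk1 : 1 ≤ k) (hkm : k ≤ m) :
    k ≤ (Finset.univ.filter fun j =>
        (Finset.univ.filter fun i => s i < s j).card ≤ k - 1).card := by
  set T := orderStat k s with hT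
  refine le_trans (orderStat_count_ge s hk1 hkm) (Finset.card_le_card ?_)
  intro j hj
  have hjT : s j ≤ T := (Finset.mem_filter.mp hj).2
  simp only [Finset.mem_filter, Finset.mem_univ, true_and]
  refine le_trans (Finset.card_le_card ?_) (orderStat_count_lt s hk1 hkm)
  intro i hi
  simp only [Finset.mem_filter, Finset.mem_univ, true_and] at hi ⊢
  exact lt_of_lt_of_le hi hjT

/-- If the test point's rank among all n+1 values is ≤ k-1, it is below the
    k-th order statistic of the first n values. -/
lemma le_orderStat_of_rank {n k : ℕ} (s : Fin (n + 1) → ℝ) (hk1 : 1 ≤ k) (hkn : k ≤ n)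
    (h : (Finset.univ.filter fun i => s i < s (Fin.last n)).card ≤ k - 1) :
    s (Fin.last n) ≤ orderStat k (fun i : Fin n => s i.castSucc) := by
  have hn : 0 < n := lt_of_lt_of_le hk1 hkn
  refine le_csInf (osSet_nonempty _ hkn hn) ?_
  intro t ht
  simp only [Set.mem_setOf_eq] at ht
  by_contra hlt
  push_neg at hlt
  have hsub : (Finset.univ.filter fun i : Fin n => s i.castSucc ≤ t).card ≤
      (Finset.univ.filter fun i => s i < s (Fin.last n)).card := by
    apply Finset.card_le_card_of_injOn (fun i => i.castSucc)
    · intro i hi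
      simp only [Finset.mem_coe, Finset.mem_filter, Finset.mem_univ, true_and] at hi ⊢
      exact lt_of_le_of_lt hi hlt
    · intro a _ b _ hab
      exact Fin.castSucc_injective n hab
  omega

open scoped ENNReal in
/-- **Finite-sample marginal coverage of split-conformal prediction.**
If `S 0, …, S n` are exchangeable real random variables, `α ∈ (0,1)`, and `q̂` is the
`⌈(n+1)(1-α)⌉`-th smallest value among `S 0, …, S (n-1)` (with `⌈(n+1)(1-α)⌉ ≤ n`), then
`P(S n ≤ q̂) ≥ 1 - α`.  Consequently, when the scores have the split-conformal normalized
form `S i = |Y i - ĉ(X i)| / r̂(X i)` with `r̂ > 0`, the calibrated interval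
`[ĉ(x) - q̂ r̂(x), ĉ(x) + q̂ r̂(x)]` covers the test response with probability `≥ 1 - α`. -/
theorem split_conformal_marginal_coverage
    {Ω : Type*} [MeasurableSpace Ω] (P : Measure Ω) [IsProbabilityMeasure P]
    {𝓧 : Type*} [MeasurableSpace 𝓧]
    (n : ℕ)
    (S : Fin (n + 1) → Ω → ℝ) (hSmeas : ∀ i, Measurable (S i))
    (hexch : ∀ π : Equiv.Perm (Fin (n + 1)),
      Measure.map (fun ω i => S (π i) ω) P = Measure.map (fun ω i => S i ω) P)
    (α : ℝ) (hα : α ∈ Set.Ioo (0 : ℝ) 1)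
    (hk : ⌈((n : ℝ) + 1) * (1 - α)⌉₊ ≤ n) :
    P {ω | S (Fin.last n) ω ≤
        orderStat (⌈((n : ℝ) + 1) * (1 - α)⌉₊) (fun i : Fin n => S i.castSucc ω)}
      ≥ ENNReal.ofReal (1 - α) ∧
    ∀ (X : Fin (n + 1) → Ω → 𝓧) (Y : Fin (n + 1) → Ω → ℝ) (chat rhat : 𝓧 → ℝ),
      (∀ x, 0 < rhat x) →
      (∀ i ω, S i ω = |Y i ω - chat (X i ω)| / rhat (X i ω)) →
      P {ω | Y (Fin.last n) ω ∈ Set.Icc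
          (chat (X (Fin.last n) ω) -
            orderStat (⌈((n : ℝ) + 1) * (1 - α)⌉₊) (fun i : Fin n => S i.castSucc ω) *
              rhat (X (Fin.last n) ω))
          (chat (X (Fin.last n) ω) +
            orderStat (⌈((n : ℝ) + 1) * (1 - α)⌉₊) (fun i : Fin n => S i.castSucc ω) *
              rhat (X (Fin.last n) ω))}
        ≥ ENNReal.ofReal (1 - α) := by
  classical
  obtain ⟨hα0, hα1⟩ := hα
  set k := ⌈((n : ℝ) + 1) * (1 - α)⌉₊ with hkdef
  have hk1 : 1 ≤ k := by
    have h1 : (0:ℝ) < ((n : ℝ) + 1) * (1 - α) := by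
      have : (0:ℝ) < 1 - α := by linarith
      positivity
    exact Nat.ceil_pos.mpr h1
  -- the random vector of scores
  set V : Ω → (Fin (n + 1) → ℝ) := fun ω i => S i ω with hVdef
  have hV : Measurable V := measurable_pi_lambda _ fun i => hSmeas i
  -- rank sets in the sequence space
  set C : Fin (n + 1) → Set (Fin (n + 1) → ℝ) := fun j =>
    {s | (Finset.univ.filter fun i => s i < s j).card ≤ k - 1} with hCdef
  have hfmeas : ∀ j : Fin (n + 1), Measurable (fun s : Fin (n + 1) → ℝ =>
      (Finset.univ.filter fun i => s i < s j).card) := by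
    intro j
    have : (fun s : Fin (n + 1) → ℝ => (Finset.univ.filter fun i => s i < s j).card)
        = fun s => ∑ i, if s i < s j then 1 else 0 := by
      funext s; rw [Finset.card_filter]
    rw [this]
    exact Finset.measurable_sum _ fun i _ =>
      Measurable.ite (measurableSet_lt (measurable_pi_apply i) (measurable_pi_apply j))
        measurable_const measurable_const
  have hCmeas : ∀ j, MeasurableSet (C j) := fun j =>
    (hfmeas j) (MeasurableSet.of_discrete (s := Set.Iic (k - 1)))
  set B : Fin (n + 1) → Set Ω := fun j => V ⁻¹' C j with hBdef
  have hBmeas : ∀ j, MeasurableSet (B j) := fun j => hV (hCmeas j)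
  -- all B j have the same probability
  have hBeq : ∀ j, P (B j) = P (B (Fin.last n)) := by
    intro j
    set π : Equiv.Perm (Fin (n + 1)) := Equiv.swap j (Fin.last n) with hπ
    have hWmeas : Measurable (fun ω i => S (π i) ω) :=
      measurable_pi_lambda _ fun i => hSmeas (π i)
    have hBj : B j = (fun ω i => S (π i) ω) ⁻¹' C (Fin.last n) := by
      ext ω
      simp only [hBdef, hCdef, Set.mem_preimage, Set.mem_setOf_eq, hVdef]
      have hπl : π (Fin.last n) = j := Equiv.swap_apply_right _ _
      have hcard : (Finset.univ.filter fun i => S (π i) ω < S (π (Fin.last n)) ω).card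
          = (Finset.univ.filter fun i => S i ω < S j ω).card := by
        refine Finset.card_bij (fun i _ => π i) ?_ ?_ ?_
        · intro a ha
          simp only [Finset.mem_filter, Finset.mem_univ, true_and] at ha ⊢
          rw [hπl] at ha
          exact ha
        · intro a _ b _ h
          exact π.injective h
        · intro b hb
          refine ⟨π.symm b, ?_, by simp⟩
          simp only [Finset.mem_filter, Finset.mem_univ, true_and] at hb ⊢
          rw [hπl]
          simpa using hb
      omega
    rw [hBj, ← Measure.map_apply hWmeas (hCmeas (Fin.last n)), hexch π,
      Measure.map_apply hV (hCmeas (Fin.last n))]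
  -- pointwise, at least k of the events B j occur
  have hpoint : ∀ ω, (k : ℝ≥0∞) ≤ ∑ j, (B j).indicator (fun _ => (1 : ℝ≥0∞)) ω := by
    intro ω
    have hr := rank_count (V ω) hk1 (by omega)
    have hcount : ∑ j, (B j).indicator (fun _ => (1 : ℝ≥0∞)) ω
        = ((Finset.univ.filter fun j => ω ∈ B j).card : ℝ≥0∞) := by
      rw [Finset.card_filter, Nat.cast_sum]
      simp [Set.indicator_apply]
    rw [hcount]
    have : (Finset.univ.filter fun j =>
        (Finset.univ.filter fun i => V ω i < V ω j).card ≤ k - 1)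
        = (Finset.univ.filter fun j => ω ∈ B j) := by
      apply Finset.filter_congr
      intro j _
      simp [hBdef, hCdef]
    rw [this] at hr
    exact_mod_cast Nat.cast_le.mpr hr
  -- sum of probabilities ≥ k
  have hsum : (k : ℝ≥0∞) ≤ ∑ j, P (B j) := by
    have h1 : ∫⁻ ω, ∑ j, (B j).indicator (fun _ => (1 : ℝ≥0∞)) ω ∂P = ∑ j, P (B j) := by
      rw [lintegral_finset_sum _ fun j _ => (measurable_const.indicator (hBmeas j))]
      refine Finset.sum_congr rfl fun j _ => ?_
      rw [lintegral_indicator (hBmeas j)]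
      simp
    rw [← h1]
    calc (k : ℝ≥0∞) = ∫⁻ _, (k : ℝ≥0∞) ∂P := by simp
      _ ≤ ∫⁻ ω, ∑ j, (B j).indicator (fun _ => (1 : ℝ≥0∞)) ω ∂P := lintegral_mono hpoint
  -- hence P (B last) ≥ (1 - α)
  have hlast : ENNReal.ofReal (1 - α) ≤ P (B (Fin.last n)) := by
    have hsum' : (k : ℝ≥0∞) ≤ ((n : ℝ≥0∞) + 1) * P (B (Fin.last n)) := by
      have : ∑ j, P (B j) = ((n + 1 : ℕ) : ℝ≥0∞) * P (B (Fin.last n)) := by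
        rw [Finset.sum_congr rfl fun j _ => hBeq j, Finset.sum_const, Finset.card_univ,
          Fintype.card_fin, nsmul_eq_mul]
      rw [this] at hsum
      convert hsum using 2
      push_cast
      ring
    have hcast : ENNReal.ofReal (1 - α) * ((n : ℝ≥0∞) + 1) ≤ (k : ℝ≥0∞) := by
      have h1 : ((n : ℝ≥0∞) + 1) = ENNReal.ofReal ((n : ℝ) + 1) := by
        rw [ENNReal.ofReal_add (by positivity) zero_le_one]
        simp
      rw [h1, ← ENNReal.ofReal_mul (by linarith)]
      have h2 : (k : ℝ≥0∞) = ENNReal.ofReal (k : ℝ) := by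
        simp
      rw [h2]
      apply ENNReal.ofReal_le_ofReal
      rw [mul_comm]
      exact Nat.le_ceil _
    have hmul : ((n : ℝ≥0∞) + 1) * ENNReal.ofReal (1 - α)
        ≤ ((n : ℝ≥0∞) + 1) * P (B (Fin.last n)) := by
      rw [mul_comm]
      exact le_trans hcast hsum'
    have hne0 : ((n : ℝ≥0∞) + 1) ≠ 0 := by simp
    have hnetop : ((n : ℝ≥0∞) + 1) ≠ ⊤ := by
      simp [ENNReal.add_eq_top]
    exact (ENNReal.mul_le_mul_iff_right hne0 hnetop).mp hmul
  -- B last is contained in the coverage event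
  have hsub : B (Fin.last n) ⊆ {ω | S (Fin.last n) ω ≤
      orderStat k (fun i : Fin n => S i.castSucc ω)} := by
    intro ω hω
    simp only [hBdef, hCdef, Set.mem_preimage, Set.mem_setOf_eq] at hω
    exact le_orderStat_of_rank (V ω) hk1 hk hω
  have hmain : P {ω | S (Fin.last n) ω ≤
      orderStat k (fun i : Fin n => S i.castSucc ω)} ≥ ENNReal.ofReal (1 - α) :=
    le_trans hlast (measure_mono hsub)
  refine ⟨hmain, ?_⟩
  intro X Y chat rhat hr hS
  have hset : {ω | Y (Fin.last n) ω ∈ Set.Icc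
      (chat (X (Fin.last n) ω) -
        orderStat k (fun i : Fin n => S i.castSucc ω) * rhat (X (Fin.last n) ω))
      (chat (X (Fin.last n) ω) +
        orderStat k (fun i : Fin n => S i.castSucc ω) * rhat (X (Fin.last n) ω))}
      = {ω | S (Fin.last n) ω ≤ orderStat k (fun i : Fin n => S i.castSucc ω)} := by
    ext ω
    simp only [Set.mem_setOf_eq, Set.mem_Icc, hS]
    rw [div_le_iff₀ (hr _), abs_le]
    constructor <;> intro h <;> constructor <;> linarith [h.1, h.2]
  rw [hset]
  exact hmain
end

section
/- Let Y be a real random variable whose distribution has a continuous density f on ℝ with f ≤ f_max everywhere, fix α ∈ (0,1), and let ψ(c) = inf{ r ≥ 0 : P(|Y − c| ≤ r) ≥ 1 − α }, so that P(|Y − ĉ| ≤ ψ(ĉ)) = 1 − α for every ĉ. Then for any ĉ ∈ ℝ, r̂ > 0, and q̂ > 0, the conditional coverage error of the interval [ĉ − q̂ r̂, ĉ + q̂ r̂] satisfies |P(|Y − ĉ| ≤ q̂ r̂) − (1 − α)| ≤ 2 f_max ( |q̂ − 1| r̂ + |r̂ − ψ(ĉ)| ). -/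
open MeasureTheory Filter Set

/-- The folded best-response radius
`ψ(c) = inf { r ≥ 0 : P(|Y - c| ≤ r) ≥ 1 - α }` of a random variable `Y` on
a probability space `(Ω, P)`. -/
noncomputable def foldedRadius {Ω : Type*} [MeasurableSpace Ω]
    (P : Measure Ω) (Y : Ω → ℝ) (α c : ℝ) : ℝ :=
  sInf {r : ℝ | 0 ≤ r ∧ 1 - α ≤ (P {ω | |Y ω - c| ≤ r}).toReal}

/-- **Conditional-coverage error bound for the calibrated interval.**
If the law of `Y` has a continuous density `f` bounded by `fmax`, then for any
`ĉ ∈ ℝ`, `r̂ > 0` and `q̂ > 0`, the coverage error of the interval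
`[ĉ - q̂ r̂, ĉ + q̂ r̂]` satisfies
`|P(|Y - ĉ| ≤ q̂ r̂) - (1 - α)| ≤ 2 fmax (|q̂ - 1| r̂ + |r̂ - ψ(ĉ)|)`. -/
theorem conditional_coverage_error_bound
    {Ω : Type*} [MeasurableSpace Ω] (P : Measure Ω) [IsProbabilityMeasure P]
    (Y : Ω → ℝ) (hY : Measurable Y)
    (f : ℝ → ℝ) (hf_cont : Continuous f) (hf_nonneg : ∀ y, 0 ≤ f y)
    (fmax : ℝ) (hfmax : ∀ y, f y ≤ fmax)
    (hdens : Measure.map Y P = volume.withDensity fun y => ENNReal.ofReal (f y))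
    (α : ℝ) (hα : α ∈ Set.Ioo (0 : ℝ) 1)
    (chat rhat qhat : ℝ) (hrhat : 0 < rhat) (hqhat : 0 < qhat) :
    |(P {ω | |Y ω - chat| ≤ qhat * rhat}).toReal - (1 - α)| ≤
      2 * fmax * (|qhat - 1| * rhat + |rhat - foldedRadius P Y α chat|) := by
  obtain ⟨hα0, hα1⟩ := hα
  have hfmax0 : 0 ≤ fmax := le_trans (hf_nonneg 0) (hfmax 0)
  set μ := Measure.map Y P with hμ
  haveI hPμ : IsProbabilityMeasure μ := Measure.isProbabilityMeasure_map hY.aemeasurable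
  have hset : ∀ r : ℝ, P {ω | |Y ω - chat| ≤ r} = μ (Metric.closedBall chat r) := by
    intro r
    have hpre : {ω | |Y ω - chat| ≤ r} = Y ⁻¹' Metric.closedBall chat r := by
      ext ω; simp [Real.dist_eq]
    rw [hpre, hμ, Measure.map_apply hY measurableSet_closedBall]
  set G : ℝ → ℝ := fun r => (μ (Metric.closedBall chat r)).toReal with hGdef
  have hfin : ∀ s : Set ℝ, μ s ≠ ⊤ := fun s => measure_ne_top μ s
  -- the density bound
  have hbound : ∀ s : Set ℝ, MeasurableSet s →
      μ s ≤ ENNReal.ofReal fmax * volume s := by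
    intro s hs
    rw [hdens, withDensity_apply _ hs]
    calc ∫⁻ y in s, ENNReal.ofReal (f y)
        ≤ ∫⁻ _ in s, ENNReal.ofReal fmax :=
          lintegral_mono fun y => ENNReal.ofReal_le_ofReal (hfmax y)
      _ = ENNReal.ofReal fmax * volume s := setLIntegral_const s _
  -- G vanishes on (-∞, 0]
  have hG0 : ∀ r : ℝ, r ≤ 0 → G r = 0 := by
    intro r hr
    have h1 : μ (Metric.closedBall chat r) ≤ ENNReal.ofReal fmax * volume (Metric.closedBall chat r) :=
      hbound _ measurableSet_closedBall
    have h2 : Metric.closedBall chat r ⊆ {chat} := by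
      intro y hy
      rcases lt_or_eq_of_le hr with hr' | hr'
      · rw [Metric.closedBall_eq_empty.mpr hr'] at hy; exact absurd hy (Set.notMem_empty y)
      · subst hr'
        simp only [Metric.mem_closedBall, Real.dist_eq] at hy
        have : y = chat := by
          have := abs_nonneg (y - chat)
          have : |y - chat| = 0 := le_antisymm hy this
          linarith [abs_eq_zero.mp this]
        simp [this]
    have h3 : volume (Metric.closedBall chat r) = 0 :=
      measure_mono_null h2 (Real.volume_singleton)
    have : μ (Metric.closedBall chat r) = 0 := by
      refine le_antisymm ?_ (zero_le)
      calc μ (Metric.closedBall chat r) ≤ ENNReal.ofReal fmax * volume (Metric.closedBall chat r) := h1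
        _ = 0 := by rw [h3, mul_zero]
    simp [hGdef, this]
  have hGnonneg : ∀ r, 0 ≤ G r := fun r => ENNReal.toReal_nonneg
  have hGmono : Monotone G := by
    intro s r hsr
    exact ENNReal.toReal_le_toReal (hfin _) (hfin _) |>.mpr
      (measure_mono (Metric.closedBall_subset_closedBall hsr))
  -- key Lipschitz estimate for 0 ≤ s ≤ r
  have key : ∀ s r : ℝ, 0 ≤ s → s ≤ r → G r ≤ G s + 2 * fmax * (r - s) := by
    intro s r hs hsr
    have hsub : Metric.closedBall chat s ⊆ Metric.closedBall chat r :=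
      Metric.closedBall_subset_closedBall hsr
    have hdiffsub : Metric.closedBall chat r \ Metric.closedBall chat s ⊆
        Icc (chat - r) (chat - s) ∪ Icc (chat + s) (chat + r) := by
      intro y hy
      obtain ⟨h1, h2⟩ := hy
      simp only [Metric.mem_closedBall, Real.dist_eq, not_le] at h1 h2
      rcases abs_cases (y - chat) with ⟨he, _⟩ | ⟨he, _⟩
      · right; constructor <;> [linarith [he ▸ h2]; linarith [he ▸ h1]]
      · left; constructor <;> [linarith [he ▸ h1]; linarith [he ▸ h2]]
    have hvol : volume (Metric.closedBall chat r \ Metric.closedBall chat s) ≤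
        ENNReal.ofReal (r - s) + ENNReal.ofReal (r - s) := by
      calc volume (Metric.closedBall chat r \ Metric.closedBall chat s)
          ≤ volume (Icc (chat - r) (chat - s) ∪ Icc (chat + s) (chat + r)) :=
            measure_mono hdiffsub
        _ ≤ volume (Icc (chat - r) (chat - s)) + volume (Icc (chat + s) (chat + r)) :=
            measure_union_le _ _
        _ = ENNReal.ofReal (r - s) + ENNReal.ofReal (r - s) := by
            rw [Real.volume_Icc, Real.volume_Icc]; ring_nf
    have hmdiff : μ (Metric.closedBall chat r \ Metric.closedBall chat s) ≤
        ENNReal.ofReal (2 * fmax * (r - s)) := by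
      calc μ (Metric.closedBall chat r \ Metric.closedBall chat s)
          ≤ ENNReal.ofReal fmax * volume (Metric.closedBall chat r \ Metric.closedBall chat s) :=
            hbound _ (measurableSet_closedBall.diff measurableSet_closedBall)
        _ ≤ ENNReal.ofReal fmax * (ENNReal.ofReal (r - s) + ENNReal.ofReal (r - s)) :=
            mul_le_mul_right hvol _
        _ = ENNReal.ofReal (2 * fmax * (r - s)) := by
            rw [← ENNReal.ofReal_add (by linarith) (by linarith),
              ← ENNReal.ofReal_mul hfmax0]
            congr 1; ring
    have hunion : μ (Metric.closedBall chat r) ≤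
        μ (Metric.closedBall chat s) + μ (Metric.closedBall chat r \ Metric.closedBall chat s) := by
      calc μ (Metric.closedBall chat r)
          = μ (Metric.closedBall chat s ∪ (Metric.closedBall chat r \ Metric.closedBall chat s)) := by
            rw [Set.union_diff_cancel hsub]
        _ ≤ _ := measure_union_le _ _
    calc G r ≤ (μ (Metric.closedBall chat s) + μ (Metric.closedBall chat r \ Metric.closedBall chat s)).toReal := by
          exact ENNReal.toReal_le_toReal (hfin _) (by
            exact ENNReal.add_ne_top.mpr ⟨hfin _, hfin _⟩) |>.mpr hunion
      _ = G s + (μ (Metric.closedBall chat r \ Metric.closedBall chat s)).toReal :=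
          ENNReal.toReal_add (hfin _) (hfin _)
      _ ≤ G s + 2 * fmax * (r - s) := by
          gcongr
          calc (μ (Metric.closedBall chat r \ Metric.closedBall chat s)).toReal
              ≤ (ENNReal.ofReal (2 * fmax * (r - s))).toReal :=
                ENNReal.toReal_le_toReal (hfin _) ENNReal.ofReal_ne_top |>.mpr hmdiff
            _ ≤ 2 * fmax * (r - s) := (ENNReal.toReal_ofReal (by nlinarith)).le
  -- Lipschitz estimate for all s ≤ r
  have key' : ∀ s r : ℝ, s ≤ r → G r ≤ G s + 2 * fmax * (r - s) := by
    intro s r hsr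
    rcases le_or_gt 0 s with hs | hs
    · exact key s r hs hsr
    rcases le_or_gt r 0 with hr | hr
    · rw [hG0 r hr, hG0 s hs.le]
      nlinarith
    · have h0 := key 0 r le_rfl hr.le
      rw [hG0 0 le_rfl, hG0 s hs.le] at *
      nlinarith
  have hLipAbs : ∀ s r : ℝ, |G r - G s| ≤ 2 * fmax * |r - s| := by
    intro s r
    rcases le_total s r with h | h
    · rw [abs_of_nonneg (by linarith [hGmono h]), abs_of_nonneg (by linarith)]
      linarith [key' s r h]
    · rw [abs_of_nonpos (by linarith [hGmono h]), abs_of_nonpos (by linarith)]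
      linarith [key' r s h]
  have hGcont : Continuous G := by
    have : LipschitzWith ⟨2 * fmax, by positivity⟩ G := by
      apply LipschitzWith.of_dist_le_mul
      intro x y
      rw [Real.dist_eq, Real.dist_eq]; exact hLipAbs y x
    exact this.continuous
  -- the defining set of foldedRadius
  set S : Set ℝ := {r : ℝ | 0 ≤ r ∧ 1 - α ≤ G r} with hSdef
  have hSeq : {r : ℝ | 0 ≤ r ∧ 1 - α ≤ (P {ω | |Y ω - chat| ≤ r}).toReal} = S := by
    ext r; simp [hSdef, hset r, hGdef]
  have hψ : foldedRadius P Y α chat = sInf S := by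
    rw [foldedRadius, hSeq]
  -- S is nonempty
  have hSne : S.Nonempty := by
    have hmon : Monotone (fun n : ℕ => Metric.closedBall chat n) := by
      intro a b hab
      exact Metric.closedBall_subset_closedBall (by exact_mod_cast hab)
    have hun : (⋃ n : ℕ, Metric.closedBall chat n) = Set.univ := by
      ext y
      simp only [Set.mem_iUnion, Set.mem_univ, iff_true, Metric.mem_closedBall]
      obtain ⟨n, hn⟩ := exists_nat_ge (dist y chat)
      exact ⟨n, hn⟩
    have htend : Tendsto (fun n : ℕ => μ (Metric.closedBall chat n)) atTop (nhds 1) := by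
      have := tendsto_measure_iUnion_atTop (μ := μ) hmon
      rwa [hun, measure_univ] at this
    have htendR : Tendsto (fun n : ℕ => G n) atTop (nhds 1) := by
      have := (ENNReal.tendsto_toReal (by simp : (1 : ENNReal) ≠ ⊤)).comp htend
      simpa [hGdef, Function.comp_def] using this
    have hev : ∀ᶠ n : ℕ in atTop, 1 - α ≤ G n :=
      htendR.eventually_const_le (by linarith)
    obtain ⟨n, hn⟩ := hev.exists
    exact ⟨n, ⟨Nat.cast_nonneg n, hn⟩⟩
  have hSbdd : BddBelow S := ⟨0, fun r hr => hr.1⟩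
  have hSclosed : IsClosed S := by
    have : S = {r : ℝ | 0 ≤ r} ∩ G ⁻¹' (Set.Ici (1 - α)) := by
      ext r; simp [hSdef, Set.mem_Ici]
    rw [this]
    exact isClosed_Ici.inter (isClosed_Ici.preimage hGcont)
  set ψ := sInf S with hψdef
  have hψmem : ψ ∈ S := hSclosed.csInf_mem hSne hSbdd
  have hψ0 : 0 ≤ ψ := hψmem.1
  have hψge : 1 - α ≤ G ψ := hψmem.2
  -- exactness: G ψ = 1 - α
  have hψle : G ψ ≤ 1 - α := by
    rcases eq_or_lt_of_le hψ0 with h0 | h0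
    · rw [← h0, hG0 0 le_rfl]; linarith
    · have hlt : ∀ r ∈ Set.Ioo 0 ψ, G r ≤ 1 - α := by
        intro r hr
        by_contra hcon
        push_neg at hcon
        have : r ∈ S := ⟨hr.1.le, hcon.le⟩
        exact absurd (csInf_le hSbdd this) (not_le.mpr hr.2)
      have htend : Tendsto G (nhdsWithin ψ (Set.Iio ψ)) (nhds (G ψ)) :=
        (hGcont.tendsto ψ).mono_left nhdsWithin_le_nhds
      refine le_of_tendsto htend ?_
      filter_upwards [Ioo_mem_nhdsLT_of_mem (Set.mem_Ioc.mpr ⟨h0, le_rfl⟩)] with r hr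
      exact hlt r hr
  have hexact : G ψ = 1 - α := le_antisymm hψle hψge
  -- finish
  rw [hset, hψ]
  show |G (qhat * rhat) - (1 - α)| ≤ 2 * fmax * (|qhat - 1| * rhat + |rhat - ψ|)
  have h1 : |G (qhat * rhat) - (1 - α)| = |G (qhat * rhat) - G ψ| := by rw [hexact]
  calc |G (qhat * rhat) - (1 - α)|
      = |G (qhat * rhat) - G ψ| := h1
    _ ≤ 2 * fmax * |qhat * rhat - ψ| := hLipAbs ψ (qhat * rhat)
    _ ≤ 2 * fmax * (|qhat - 1| * rhat + |rhat - ψ|) := by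
        gcongr
        calc |qhat * rhat - ψ| ≤ |qhat * rhat - rhat| + |rhat - ψ| := abs_sub_le _ rhat _
          _ = |qhat - 1| * rhat + |rhat - ψ| := by
              rw [show qhat * rhat - rhat = (qhat - 1) * rhat by ring, abs_mul,
                abs_of_pos hrhat]
end
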